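/- Suppose ξ is a curve in ℝ²₄ whose Frenet curvatures κ and k are constant and whose third curvature ρ = r - ε_t ε_T ε_N κ is zero (a w-curve with vanishing third curvature, as in the example). Then for the involute φ with T_φ = ε_N N, the vector field N_φ := T_φ'/‖T_φ'‖ = (-ε_t κ T + ε_n ε_N k B)/√|ε_n ε_T k² + ε_T κ²| has constant coefficients, and its derivative N_φ' is proportional to N; hence N_φ' is proportional to T_φ, meaning the second curvature k* of the involute vanishes. -/

import Mathlib

theorem deriv_const_smul_linear_combination {F : Type*} [NormedAddCommGroup F] [NormedSpace ℝ F]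
    {f g : ℝ → F} {s : ℝ} (hf : DifferentiableAt ℝ f s) (hg : DifferentiableAt ℝ g s)
    (c a b : ℝ) :
    deriv (fun t => c • (a • f t + b • g t)) s = c • (a • deriv f s + b • deriv g s) :=
  (((hf.hasDerivAt.const_smul a).add (hg.hasDerivAt.const_smul b)).const_smul c).deriv

theorem exists_smul_eq_smul_smul {K V : Type*} [Field K] [AddCommGroup V] [Module K V]
    {ε : K} (hε : ε ≠ 0) (c : K) (v : V) : ∃ μ : K, c • v = μ • ε • v :=
  ⟨c / ε, by rw [smul_smul, div_mul_cancel₀ c hε]⟩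

theorem stmt13_general (T N B : ℝ → Fin 4 → ℝ) (κ k : ℝ → ℝ) (κ₀ k₀ : ℝ)
    (εT εN εt εn : ℝ)
    (hεN : εN = 1 ∨ εN = -1)
    (hκ : ∀ s, κ s = κ₀) (hk : ∀ s, k s = k₀)
    (hTdiff : Differentiable ℝ T) (hBdiff : Differentiable ℝ B)
    (hT' : ∀ s, deriv T s = (εN * κ s) • N s)
    (hB' : ∀ s, deriv B s = (-(εt * k s)) • N s) :
    (∀ s, deriv (fun t =>
        (Real.sqrt |εn * εT * k₀ ^ 2 + εT * κ₀ ^ 2|)⁻¹ •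
          ((-(εt * κ₀)) • T t + (εn * εN * k₀) • B t)) s
      = ((Real.sqrt |εn * εT * k₀ ^ 2 + εT * κ₀ ^ 2|)⁻¹ *
          (-(εt * εN * κ₀ ^ 2) - εt * εn * εN * k₀ ^ 2)) • N s) ∧
    (∀ s, ∃ μ : ℝ, deriv (fun t =>
        (Real.sqrt |εn * εT * k₀ ^ 2 + εT * κ₀ ^ 2|)⁻¹ •
          ((-(εt * κ₀)) • T t + (εn * εN * k₀) • B t)) s
      = μ • (εN • N s)) := by
  have hεN₀ : εN ≠ 0 := by rcases hεN with h | h <;> simp [h]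
  refine (fun hderiv => ⟨hderiv, fun s => hderiv s ▸ exists_smul_eq_smul_smul hεN₀ _ _⟩)
    fun s => ?_
  rw [deriv_const_smul_linear_combination (hTdiff s) (hBdiff s), hT', hB', hκ, hk]
  module

/-- For a w-curve `ξ` in `ℝ²₄` (constant curvatures `κ`, `k`, third curvature
`ρ ≡ 0`), the normal `N_φ = (-ε_t κ T + ε_n ε_N k B)/√|ε_n ε_T k² + ε_T κ²|`
of the involute has constant coefficients, and its derivative is proportional
to `N`, hence to `T_φ = ε_N N`; so the second curvature of the involute
vanishes. -/
theorem stmt13 (T N B E : ℝ → Fin 4 → ℝ) (κ k : ℝ → ℝ) (κ₀ k₀ : ℝ)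
    (εT εN εt εn εb : ℝ)
    (hεT : εT = 1 ∨ εT = -1) (hεN : εN = 1 ∨ εN = -1)
    (hεt : εt = 1 ∨ εt = -1) (hεn : εn = 1 ∨ εn = -1) (hεb : εb = 1 ∨ εb = -1)
    (hκ : ∀ s, κ s = κ₀) (hk : ∀ s, k s = k₀)
    (hTdiff : Differentiable ℝ T) (hBdiff : Differentiable ℝ B)
    (hT' : ∀ s, deriv T s = (εN * κ s) • N s)
    (hN' : ∀ s, deriv N s = (-(εt * εN * κ s)) • T s + (εn * k s) • B s)
    (hB' : ∀ s, deriv B s = (-(εt * k s)) • N s)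
    (hE' : ∀ s, deriv E s = 0) :
    (∀ s, deriv (fun t =>
        (Real.sqrt |εn * εT * k₀ ^ 2 + εT * κ₀ ^ 2|)⁻¹ •
          ((-(εt * κ₀)) • T t + (εn * εN * k₀) • B t)) s
      = ((Real.sqrt |εn * εT * k₀ ^ 2 + εT * κ₀ ^ 2|)⁻¹ *
          (-(εt * εN * κ₀ ^ 2) - εt * εn * εN * k₀ ^ 2)) • N s) ∧
    (∀ s, ∃ μ : ℝ, deriv (fun t =>
        (Real.sqrt |εn * εT * k₀ ^ 2 + εT * κ₀ ^ 2|)⁻¹ •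
          ((-(εt * κ₀)) • T t + (εn * εN * k₀) • B t)) s
      = μ • (εN • N s)) :=
  stmt13_general T N B κ k κ₀ k₀ εT εN εt εn hεN hκ hk hTdiff hBdiff hT' hB'
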